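/- Switching lemma: let G be a k-uniform supertree with boundary and f its first Dirichlet eigenfunction. Let e_1, e_2 be edges, U_1 ⊆ e_1, V_1 ⊆ e_2 with |U_1| = |V_1|, and suppose the switched hypergraph G' = G(e_1 ⇌ e_2 exchanging U_1 and V_1) is again a k-uniform supertree with the same boundary structure. If Σ_{u∈U_1} f(u) ≥ Σ_{v∈V_1} f(v) and Σ_{u∈e_1∖U_1} f(u) ≤ Σ_{v∈e_2∖V_1} f(v), then λ(G') ≤ λ(G). -/

import Mathlib

open Finset

variable {V : Type*} [Fintype V] [DecidableEq V]

/-- The degree of a vertex: the number of edges containing it. -/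
def deg (E : Finset (Finset V)) (v : V) : ℕ := (E.filter (fun e => v ∈ e)).card

/-- The adjacency matrix of a hypergraph. -/
noncomputable def adjMat (E : Finset (Finset V)) (i j : V) : ℝ :=
  if i ≠ j then ∑ e ∈ E.filter (fun e => i ∈ e ∧ j ∈ e), (1 : ℝ) / ((e.card : ℝ) - 1) else 0

/-- The Laplacian L = D - A applied to a function. -/
noncomputable def lap (E : Finset (Finset V)) (f : V → ℝ) (i : V) : ℝ :=
  (deg E i : ℝ) * f i - ∑ j, adjMat E i j * f j

/-- The Laplacian quadratic form ⟨Lf, f⟩. -/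
noncomputable def lapForm (E : Finset (Finset V)) (f : V → ℝ) : ℝ :=
  ∑ i, lap E f i * f i

/-- Two vertices are adjacent if they are distinct and share an edge. -/
def HAdj (E : Finset (Finset V)) (u v : V) : Prop :=
  u ≠ v ∧ ∃ e ∈ E, u ∈ e ∧ v ∈ e

/-- A hypergraph is connected if any two vertices are joined by a path. -/
def HyperConnected (E : Finset (Finset V)) : Prop :=
  ∀ u v : V, Relation.ReflTransGen (HAdj E) u v

/-- A cycle: distinct vertices u_1,…,u_p and distinct edges e_1,…,e_p (p ≥ 2)
with u_i, u_{i+1} ∈ e_i cyclically. -/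
def HasCycle (E : Finset (Finset V)) : Prop :=
  ∃ (p : ℕ) (hp : 2 ≤ p) (u : Fin p → V) (e : Fin p → Finset V),
    Function.Injective u ∧ Function.Injective e ∧
    (∀ i, e i ∈ E) ∧ (∀ i : Fin p, u i ∈ e i ∧ u (i + ⟨1, by omega⟩) ∈ e i)

/-- A k-uniform supertree: connected, acyclic, every edge of size k. -/
def IsSupertree (k : ℕ) (E : Finset (Finset V)) : Prop :=
  (∀ e ∈ E, e.card = k) ∧ HyperConnected E ∧ ¬ HasCycle E

/-- The Rayleigh quotient. -/
noncomputable def rayleigh (E : Finset (Finset V)) (f : V → ℝ) : ℝ :=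
  lapForm E f / ∑ v, (f v) ^ 2

/-- f vanishes on the boundary (the degree-one vertices). -/
def Vanishes (E : Finset (Finset V)) (f : V → ℝ) : Prop :=
  ∀ v, deg E v = 1 → f v = 0

/-- The first Dirichlet eigenvalue: infimum of Rayleigh quotients of nonzero
functions vanishing on the boundary. -/
noncomputable def firstEig (E : Finset (Finset V)) : ℝ :=
  sInf {r : ℝ | ∃ f : V → ℝ, f ≠ 0 ∧ Vanishes E f ∧ r = rayleigh E f}

/-- The first Dirichlet eigenfunction: normalized, vanishing on the boundary,
positive on interior vertices, and an eigenfunction of the first eigenvalue. -/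
noncomputable def IsFirstEigfun (E : Finset (Finset V)) (f : V → ℝ) : Prop :=
  (∑ v, (f v) ^ 2) = 1 ∧ Vanishes E f ∧ (∀ v, deg E v ≠ 1 → 0 < f v) ∧
  (∀ v, deg E v ≠ 1 → lap E f v = firstEig E * f v)

/-- The underlying simple graph of a hypergraph. -/
def toGraph (E : Finset (Finset V)) : SimpleGraph V where
  Adj u v := u ≠ v ∧ ∃ e ∈ E, u ∈ e ∧ v ∈ e
  symm := by
    constructor
    rintro u v ⟨h, e, he, hu, hv⟩
    exact ⟨h.symm, e, he, hv, hu⟩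
  loopless := by constructor; rintro u ⟨h, -⟩; exact h rfl

/-- The height of a vertex: distance to the root v0. -/
noncomputable def height (E : Finset (Finset V)) (v0 v : V) : ℕ := (toGraph E).dist v0 v

/-- Two hypergraphs have the same degree sequence. -/
def SameDegSeq (E E' : Finset (Finset V)) : Prop :=
  Multiset.map (deg E) Finset.univ.val = Multiset.map (deg E') Finset.univ.val

/-- The Faber–Krahn property: minimal first Dirichlet eigenvalue among all
k-uniform supertrees with the same degree sequence. -/
noncomputable def FKProperty (k : ℕ) (E : Finset (Finset V)) : Prop :=
  IsSupertree k E ∧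
  ∀ E' : Finset (Finset V), IsSupertree k E' → SameDegSeq E E' → firstEig E ≤ firstEig E'

/-- A spiral-like ordering (SLO-ordering) with root v0, encoded by an injective
rank function r; conditions (S1)–(S5). -/
def IsSLO (E : Finset (Finset V)) (v0 : V) (r : V → ℕ) : Prop :=
  Function.Injective r ∧ (∀ v, r v0 ≤ r v) ∧
  -- (S1)
  (∀ u v, r u < r v → height E v0 u ≤ height E v0 v) ∧
  -- (S2)
  (∀ u v u1 v1 : V, (toGraph E).Adj u u1 → height E v0 u1 = height E v0 u + 1 →
     (toGraph E).Adj v v1 → height E v0 v1 = height E v0 v + 1 →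
     r u < r v → r u1 < r v1) ∧
  -- (S3)
  (∀ u v, r u < r v → deg E u = 1 → deg E v = 1) ∧
  -- (S4): no vertex outside an edge lies between two non-minimal vertices of the edge
  (∀ e ∈ E, ∀ x ∈ e, ∀ y ∈ e, ∀ z : V, z ∉ e → r x < r z → r z < r y → ∀ w ∈ e, r x ≤ r w) ∧
  -- (S5)
  (∀ u v, deg E u ≠ 1 → deg E v ≠ 1 → r u < r v → deg E u ≤ deg E v)

/-- A supertree admitting an SLO-ordering. -/
def HasSLO (E : Finset (Finset V)) : Prop := ∃ (v0 : V) (r : V → ℕ), IsSLO E v0 r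

/-- Isomorphism of hypergraphs on the same vertex set. -/
def IsoHyper (E E' : Finset (Finset V)) : Prop :=
  ∃ σ : V ≃ V, E' = E.image (fun e => e.image σ)

/-!
Both Rayleigh forms are sums over edges of `(k Σ_e f² - (Σ_e f)²) / (k - 1)`. Let `a, b, c, d`
be the sums of `f` over `e₁ ∖ U₁, U₁, e₂ ∖ V₁, V₁`. The switched edges carry the same vertices
as `e₁, e₂` in total, so the terms `Σ f²` do not change, and the squared sums change from
`(a + b)² + (c + d)²` to `(a + d)² + (c + b)²`, i.e. by `-2 (a - c) (b - d) ≥ 0`. Hence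
`⟨L_{G'} f, f⟩ ≤ ⟨L_G f, f⟩ = λ(G)`, and `λ(G') ≤ ⟨L_{G'} f, f⟩` because `f` vanishes on the
boundary of `G'`: switching preserves every degree, provided neither switched edge is already
an edge of `G`, which acyclicity of `G` and connectivity of `G'` rule out.
-/

noncomputable def edgeForm (e : Finset V) (f : V → ℝ) : ℝ :=
  ∑ i ∈ e, (f i - (∑ j ∈ e, f j - f i) / ((e.card : ℝ) - 1)) * f i

lemma sum_adjMat_mul (E : Finset (Finset V)) (f : V → ℝ) (i : V) :
    ∑ j, adjMat E i j * f j =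
      ∑ e ∈ E.filter (i ∈ ·), (∑ j ∈ e, f j - f i) / ((e.card : ℝ) - 1) := by
  have hterm : ∀ j, adjMat E i j * f j =
      ∑ e ∈ E.filter (i ∈ ·), if j ∈ e.erase i then f j / ((e.card : ℝ) - 1) else 0 := by
    intro j
    by_cases hij : i = j
    · subst hij; simp [adjMat]
    · rw [adjMat, if_pos hij, sum_mul, sum_filter, sum_filter]
      refine sum_congr rfl fun e _ => ?_
      by_cases hi : i ∈ e <;> by_cases hj : j ∈ e <;> simp [hi, hj, Ne.symm hij, div_eq_inv_mul]
  simp_rw [hterm]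
  rw [sum_comm]
  refine sum_congr rfl fun e he => ?_
  rw [sum_ite_mem, univ_inter, ← sum_div, sum_erase_eq_sub (mem_filter.1 he).2]

lemma lap_eq_sum (E : Finset (Finset V)) (f : V → ℝ) (i : V) :
    lap E f i = ∑ e ∈ E.filter (i ∈ ·), (f i - (∑ j ∈ e, f j - f i) / ((e.card : ℝ) - 1)) := by
  rw [lap, sum_adjMat_mul, sum_sub_distrib, sum_const, nsmul_eq_mul, deg]

lemma lapForm_eq_sum_edgeForm (E : Finset (Finset V)) (f : V → ℝ) :
    lapForm E f = ∑ e ∈ E, edgeForm e f := by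
  simp_rw [lapForm, lap_eq_sum, sum_mul, edgeForm, sum_filter]
  rw [sum_comm]
  simp_rw [sum_ite_mem, univ_inter]

lemma edgeForm_eq {V : Type*} {e : Finset V} (he : 2 ≤ e.card) (f : V → ℝ) :
    edgeForm e f = ((e.card : ℝ) * ∑ i ∈ e, f i ^ 2 - (∑ i ∈ e, f i) ^ 2) / ((e.card : ℝ) - 1) := by
  have hpos : (0 : ℝ) < (e.card : ℝ) - 1 := by
    have : (2 : ℝ) ≤ e.card := by exact_mod_cast he
    linarith
  rw [edgeForm, eq_div_iff hpos.ne', sum_mul]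
  have hsum : ∑ i ∈ e, (f i - (∑ j ∈ e, f j - f i) / ((e.card : ℝ) - 1)) * f i * ((e.card : ℝ) - 1)
      = ∑ i ∈ e, ((e.card : ℝ) * f i ^ 2 - (∑ j ∈ e, f j) * f i) := by
    refine sum_congr rfl fun i _ => ?_
    field_simp
    ring
  rw [hsum, sum_sub_distrib, ← mul_sum, ← mul_sum, sq (∑ i ∈ e, f i)]

lemma edgeForm_nonneg {V : Type*} {e : Finset V} (he : 2 ≤ e.card) (f : V → ℝ) :
    0 ≤ edgeForm e f := by
  have hcs := sum_mul_sq_le_sq_mul_sq e (fun _ => (1 : ℝ)) f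
  simp only [one_mul, one_pow, sum_const, nsmul_eq_mul, mul_one] at hcs
  rw [edgeForm_eq he]
  have : (2 : ℝ) ≤ e.card := by exact_mod_cast he
  exact div_nonneg (by linarith) (by linarith)

lemma lapForm_nonneg {E : Finset (Finset V)} (hE : ∀ e ∈ E, 2 ≤ e.card) (f : V → ℝ) :
    0 ≤ lapForm E f := by
  rw [lapForm_eq_sum_edgeForm]
  exact sum_nonneg fun e he => edgeForm_nonneg (hE e he) f

lemma IsFirstEigfun.firstEig_eq_lapForm {E : Finset (Finset V)} {f : V → ℝ}
    (hf : IsFirstEigfun E f) : firstEig E = lapForm E f := by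
  obtain ⟨hnorm, hvan, -, heig⟩ := hf
  have hterm : ∀ i, lap E f i * f i = firstEig E * f i ^ 2 := by
    intro i
    by_cases hi : deg E i = 1
    · rw [hvan i hi]; ring
    · rw [heig i hi]; ring
  rw [lapForm, sum_congr rfl fun i _ => hterm i, ← mul_sum, hnorm, mul_one]

lemma firstEig_le_lapForm {E : Finset (Finset V)} (hE : ∀ e ∈ E, 2 ≤ e.card) {f : V → ℝ}
    (hvan : Vanishes E f) (hnorm : ∑ v, f v ^ 2 = 1) : firstEig E ≤ lapForm E f := by
  have hf : f ≠ 0 := by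
    rintro rfl
    simp at hnorm
  refine csInf_le ⟨0, ?_⟩ ⟨f, hf, hvan, by rw [rayleigh, hnorm, div_one]⟩
  rintro _ ⟨g, -, -, rfl⟩
  exact div_nonneg (lapForm_nonneg hE g) (sum_nonneg fun v _ => sq_nonneg (g v))

lemma sum_switched_add_sum {V M : Type*} [DecidableEq V] [AddCommMonoid M] (ψ : V → M)
    {e1 e2 U1 V1 : Finset V} (hU : U1 ⊆ e1) (hV : V1 ⊆ e2)
    (hd1 : Disjoint (e1 \ U1) V1) (hd2 : Disjoint (e2 \ V1) U1) :
    ∑ i ∈ (e1 \ U1) ∪ V1, ψ i + ∑ i ∈ (e2 \ V1) ∪ U1, ψ i = ∑ i ∈ e1, ψ i + ∑ i ∈ e2, ψ i := by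
  rw [sum_union hd1, sum_union hd2, ← sum_sdiff hU, ← sum_sdiff hV]
  abel

lemma sum_replace_pair {V M : Type*} [DecidableEq V] [AddCommMonoid M] (φ : Finset V → M)
    {E : Finset (Finset V)} {e1 e2 e1' e2' : Finset V} (he1 : e1 ∈ E) (he2 : e2 ∈ E)
    (hne : e1 ≠ e2) (hne' : e1' ≠ e2') (hnew1 : e1' ∉ E \ {e1, e2}) (hnew2 : e2' ∉ E \ {e1, e2}) :
    ∑ e ∈ (E \ {e1, e2}) ∪ {e1', e2'}, φ e + (φ e1 + φ e2) = ∑ e ∈ E, φ e + (φ e1' + φ e2') := by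
  have hdisj : Disjoint (E \ {e1, e2}) {e1', e2'} := by
    rw [disjoint_insert_right, disjoint_singleton_right]
    exact ⟨hnew1, hnew2⟩
  have hsub : {e1, e2} ⊆ E := insert_subset he1 (singleton_subset_iff.2 he2)
  rw [sum_union hdisj, sum_pair hne', ← sum_sdiff hsub (f := φ), sum_pair hne]
  abel

lemma disjoint_sdiff_of_card_union {V : Type*} [DecidableEq V] {e U1 V1 : Finset V}
    (hU : U1 ⊆ e) (hcard : U1.card = V1.card) (he : ((e \ U1) ∪ V1).card = e.card) :
    Disjoint (e \ U1) V1 := by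
  have hunion := card_union_add_card_inter (e \ U1) V1
  have hsdiff := card_sdiff_add_card_eq_card hU
  rw [disjoint_iff_inter_eq_empty, ← card_eq_zero]
  omega

lemma deg_switched {V : Type*} [DecidableEq V] {E : Finset (Finset V)}
    {e1 e2 U1 V1 : Finset V} (he1 : e1 ∈ E) (he2 : e2 ∈ E) (hU : U1 ⊆ e1) (hV : V1 ⊆ e2)
    (hd1 : Disjoint (e1 \ U1) V1) (hd2 : Disjoint (e2 \ V1) U1)
    (hne : e1 ≠ e2) (hne' : (e1 \ U1) ∪ V1 ≠ (e2 \ V1) ∪ U1)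
    (hnew1 : (e1 \ U1) ∪ V1 ∉ E \ {e1, e2}) (hnew2 : (e2 \ V1) ∪ U1 ∉ E \ {e1, e2})
    (v : V) : deg ((E \ {e1, e2}) ∪ {(e1 \ U1) ∪ V1, (e2 \ V1) ∪ U1}) v = deg E v := by
  have hdeg : ∀ F : Finset (Finset V), deg F v = ∑ e ∈ F, ∑ i ∈ e, if i = v then 1 else 0 := by
    intro F
    simp only [deg, card_filter, sum_ite_eq']
  rw [hdeg, hdeg]
  have h := sum_replace_pair (fun e => ∑ i ∈ e, if i = v then 1 else 0) he1 he2 hne hne'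
    hnew1 hnew2
  rw [sum_switched_add_sum _ hU hV hd1 hd2] at h
  exact add_right_cancel h

lemma edgeForm_switched_le {V : Type*} [DecidableEq V] {k : ℕ} (hk : 2 ≤ k) {f : V → ℝ}
    {e1 e2 U1 V1 : Finset V} (hU : U1 ⊆ e1) (hV : V1 ⊆ e2)
    (hd1 : Disjoint (e1 \ U1) V1) (hd2 : Disjoint (e2 \ V1) U1)
    (hc1 : e1.card = k) (hc2 : e2.card = k)
    (hc1' : ((e1 \ U1) ∪ V1).card = k) (hc2' : ((e2 \ V1) ∪ U1).card = k)
    (h1 : ∑ x ∈ V1, f x ≤ ∑ x ∈ U1, f x) (h2 : ∑ x ∈ e1 \ U1, f x ≤ ∑ x ∈ e2 \ V1, f x) :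
    edgeForm ((e1 \ U1) ∪ V1) f + edgeForm ((e2 \ V1) ∪ U1) f ≤ edgeForm e1 f + edgeForm e2 f := by
  have hk' : (0 : ℝ) < (k : ℝ) - 1 := by
    have : (2 : ℝ) ≤ k := by exact_mod_cast hk
    linarith
  rw [edgeForm_eq (by omega), edgeForm_eq (by omega), edgeForm_eq (by omega),
    edgeForm_eq (by omega), hc1, hc2, hc1', hc2', ← add_div, ← add_div,
    div_le_div_iff_of_pos_right hk']
  have hsq := sum_switched_add_sum (fun i => f i ^ 2) hU hV hd1 hd2
  have hs1 : ∑ i ∈ e1, f i = ∑ i ∈ e1 \ U1, f i + ∑ i ∈ U1, f i := (sum_sdiff hU).symm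
  have hs2 : ∑ i ∈ e2, f i = ∑ i ∈ e2 \ V1, f i + ∑ i ∈ V1, f i := (sum_sdiff hV).symm
  have hs1' : ∑ i ∈ (e1 \ U1) ∪ V1, f i = ∑ i ∈ e1 \ U1, f i + ∑ i ∈ V1, f i :=
    sum_union hd1
  have hs2' : ∑ i ∈ (e2 \ V1) ∪ U1, f i = ∑ i ∈ e2 \ V1, f i + ∑ i ∈ U1, f i :=
    sum_union hd2
  rw [hs1, hs2, hs1', hs2']
  nlinarith [mul_nonneg (sub_nonneg.2 h2) (sub_nonneg.2 h1), congrArg ((k : ℝ) * ·) hsq]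

lemma switch_ne_of_ne {V : Type*} [DecidableEq V] {e1 e2 U1 V1 : Finset V}
    (hne : e1 ≠ e2) (hc1 : ((e1 \ U1) ∪ V1).card ≤ e1.card)
    (hc2 : ((e2 \ V1) ∪ U1).card ≤ e2.card) :
    (e1 \ U1) ∪ V1 ≠ (e2 \ V1) ∪ U1 := by
  intro h
  have hsub1 : e1 ⊆ (e1 \ U1) ∪ V1 := by
    intro x hx
    by_cases hxU : x ∈ U1
    · exact h ▸ mem_union_right _ hxU
    · exact mem_union_left _ (mem_sdiff.2 ⟨hx, hxU⟩)
  have hsub2 : e2 ⊆ (e2 \ V1) ∪ U1 := by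
    intro x hx
    by_cases hxV : x ∈ V1
    · exact h.symm ▸ mem_union_right _ hxV
    · exact mem_union_left _ (mem_sdiff.2 ⟨hx, hxV⟩)
  exact hne ((eq_of_subset_of_card_le hsub1 hc1).trans
    (h.trans (eq_of_subset_of_card_le hsub2 hc2).symm))

lemma hasCycle_of_two_edges {V : Type*} {E : Finset (Finset V)} {A B : Finset V}
    (hA : A ∈ E) (hB : B ∈ E) (hAB : A ≠ B) {x y : V} (hxy : x ≠ y)
    (hxA : x ∈ A) (hyA : y ∈ A) (hxB : x ∈ B) (hyB : y ∈ B) : HasCycle E := by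
  refine ⟨2, le_rfl, ![x, y], ![A, B], ?_, ?_, ?_, ?_⟩
  · intro i j hij
    fin_cases i <;> fin_cases j <;> simp_all
  · intro i j hij
    fin_cases i <;> fin_cases j <;> simp_all
  · intro i
    fin_cases i <;> simp [hA, hB]
  · intro i
    fin_cases i <;> simp_all

lemma SimpleGraph.Walk.not_adj_getVert_of_length_eq_dist {V : Type*} {G : SimpleGraph V}
    {u v : V} (p : G.Walk u v) (hp : p.length = G.dist u v) {i j : ℕ} (hij : i + 1 < j)
    (hj : j ≤ p.length) : ¬ G.Adj (p.getVert i) (p.getVert j) := by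
  intro hadj
  have := SimpleGraph.dist_le ((p.take i).append (Walk.cons hadj (p.drop j)))
  simp only [Walk.length_append, Walk.length_cons, Walk.take_length, Walk.drop_length] at this
  omega

lemma hasCycle_of_reflTransGen_erase {V : Type*} [DecidableEq V] {E : Finset (Finset V)}
    {e : Finset V} (he : e ∈ E) {a b : V} (ha : a ∈ e) (hb : b ∈ e) (hab : a ≠ b)
    (h : Relation.ReflTransGen (HAdj (E.erase e)) a b) : HasCycle E := by
  obtain ⟨p, hp⟩ := ((SimpleGraph.reachable_iff_reflTransGen (G := toGraph (E.erase e)) a b).2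
    h).exists_walk_length_eq_dist
  set m := p.length with hm
  have hm0 : 0 < m := Nat.pos_of_ne_zero fun h0 => hab (p.eq_of_length_eq_zero h0)
  have hpath := p.isPath_of_length_eq_dist hp
  have hstep : ∀ i : Fin m, ∃ g ∈ E.erase e, p.getVert i ∈ g ∧ p.getVert (i + 1) ∈ g :=
    fun i => (p.adj_getVert_succ i.2).2
  choose g hgE hg using hstep
  -- a repeated edge would give a shortcut
  have hginj : ∀ i j : Fin m, i < j → g i ≠ g j := by
    intro i j hij hgij
    have hne : p.getVert i ≠ p.getVert (j + 1) := fun h =>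
      absurd (hpath.getVert_injOn (by simp; omega) (by simp; omega) h) (by omega)
    exact p.not_adj_getVert_of_length_eq_dist hp (by simpa using Nat.succ_lt_succ hij) j.2
      ⟨hne, g i, hgE i, (hg i).1, hgij ▸ (hg j).2⟩
  -- closing the shortest walk from `a` to `b` in `E - e` by `e` gives the cycle
  let c : Fin (m + 1) → Finset V := fun i => if hi : i.val < m then g ⟨i, hi⟩ else e
  have hsucc : ∀ i : Fin (m + 1), ((i + ⟨1, by omega⟩ : Fin (m + 1)) : ℕ) =
      if i.val < m then i.val + 1 else 0 := by
    intro i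
    rw [Fin.val_add]
    split_ifs with hi
    · exact Nat.mod_eq_of_lt (by simp; omega)
    · simp [show i.val = m by omega]
  refine ⟨m + 1, by omega, fun i => p.getVert i, c, ?_, ?_, ?_, ?_⟩
  · intro i j hij
    exact Fin.ext (hpath.getVert_injOn (Nat.lt_succ_iff.1 i.2) (Nat.lt_succ_iff.1 j.2) hij)
  · intro i j hij
    by_cases hi : i.val < m <;> by_cases hj : j.val < m <;> simp only [c, hi, hj, dif_pos,
      dif_neg, not_false_eq_true] at hij
    · rcases lt_trichotomy (⟨i, hi⟩ : Fin m) ⟨j, hj⟩ with hlt | heq | hgt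
      · exact absurd hij (hginj _ _ hlt)
      · exact Fin.ext (Fin.mk.inj heq)
      · exact absurd hij.symm (hginj _ _ hgt)
    · exact absurd hij (ne_of_mem_erase (hgE _))
    · exact absurd hij.symm (ne_of_mem_erase (hgE _))
    · exact Fin.ext (by omega)
  · intro i
    by_cases hi : i.val < m
    · simp only [c, dif_pos hi]; exact mem_of_mem_erase (hgE _)
    · simp only [c, dif_neg hi]; exact he
  · intro i
    beta_reduce
    rw [hsucc]
    by_cases hi : i.val < m
    · simp only [c, dif_pos hi, if_pos hi]; exact hg _
    · simp only [c, dif_neg hi, if_neg hi, SimpleGraph.Walk.getVert_zero]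
      rw [show i.val = m by omega, hm, SimpleGraph.Walk.getVert_length]
      exact ⟨hb, ha⟩

lemma HAdj.mono {V : Type*} {F F' : Finset (Finset V)} (h : F ⊆ F') {x y : V}
    (hxy : HAdj F x y) : HAdj F' x y :=
  let ⟨hne, g, hg, hx, hy⟩ := hxy
  ⟨hne, g, h hg, hx, hy⟩

lemma reflTransGen_hAdj_mono {V : Type*} {F F' : Finset (Finset V)} (h : F ⊆ F') {x y : V}
    (hxy : Relation.ReflTransGen (HAdj F) x y) : Relation.ReflTransGen (HAdj F') x y :=
  Relation.ReflTransGen.mono (fun _ _ => HAdj.mono h) x y hxy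

lemma reflTransGen_or_exists_of_reflTransGen_insert {V : Type*} [DecidableEq V]
    {F : Finset (Finset V)} {d : Finset V} {a b : V}
    (h : Relation.ReflTransGen (HAdj (insert d F)) a b) :
    Relation.ReflTransGen (HAdj F) a b ∨ ∃ z ∈ d, Relation.ReflTransGen (HAdj F) z b := by
  induction h with
  | refl => exact Or.inl Relation.ReflTransGen.refl
  | tail _ hstep ih =>
    obtain ⟨hne, g, hg, hx, hy⟩ := hstep
    rcases mem_insert.1 hg with rfl | hgF
    · exact Or.inr ⟨_, hy, Relation.ReflTransGen.refl⟩
    · have hstep' : HAdj F _ _ := ⟨hne, g, hgF, hx, hy⟩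
      rcases ih with ih | ⟨z, hz, ih⟩
      · exact Or.inl (ih.tail hstep')
      · exact Or.inr ⟨z, hz, ih.tail hstep'⟩

lemma switched_fst_not_mem {V : Type*} [DecidableEq V] {E : Finset (Finset V)}
    {e1 e2 U1 V1 : Finset V} (hE : ¬ HasCycle E)
    (hE' : HyperConnected ((E \ {e1, e2}) ∪ {(e1 \ U1) ∪ V1, (e2 \ V1) ∪ U1}))
    (he1 : e1 ∈ E) (he2 : e2 ∈ E) (hU : U1 ⊆ e1) (hV : V1 ⊆ e2) (hcard : U1.card = V1.card)
    (hd1 : Disjoint (e1 \ U1) V1) (hc : 2 ≤ ((e1 \ U1) ∪ V1).card) :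
    (e1 \ U1) ∪ V1 ∉ E \ {e1, e2} := by
  intro hmem
  have hmemE := (mem_sdiff.1 hmem).1
  have hne1 : (e1 \ U1) ∪ V1 ≠ e1 := fun h => (mem_sdiff.1 hmem).2 (by simp [h])
  have hne2 : (e1 \ U1) ∪ V1 ≠ e2 := fun h => (mem_sdiff.1 hmem).2 (by simp [h])
  rcases (e1 \ U1).eq_empty_or_nonempty with hA | ⟨w, hw⟩
  · rw [hA, empty_union] at hc hmemE hne2
    obtain ⟨x, hx, y, hy, hxy⟩ := one_lt_card.1 hc
    exact hE (hasCycle_of_two_edges hmemE he2 hne2 hxy hx hy (hV hx) (hV hy))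
  rcases V1.eq_empty_or_nonempty with hB | ⟨x, hx⟩
  · rw [hB, union_empty] at hc hmemE hne1
    obtain ⟨x, hx, y, hy, hxy⟩ := one_lt_card.1 hc
    exact hE (hasCycle_of_two_edges hmemE he1 hne1 hxy hx hy
      (sdiff_subset hx) (sdiff_subset hy))
  obtain ⟨u, hu⟩ : U1.Nonempty := card_pos.1 (hcard ▸ card_pos.2 ⟨x, hx⟩)
  -- `G'` is `G` with `e₁, e₂` replaced by the single new edge `(e₂ ∖ V₁) ∪ U₁`, so any path
  -- of `G'` from `u ∈ U₁` to `w ∈ e₁ ∖ U₁` yields a path of `G - e₁` or of `G - e₂`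
  -- between two vertices of that edge
  set D := E \ {e1, e2}
  have hD1 : D ⊆ E.erase e1 := fun g hg => by simp [D] at hg ⊢; tauto
  have hD2 : D ⊆ E.erase e2 := fun g hg => by simp [D] at hg ⊢; tauto
  have hsub : D ∪ {(e1 \ U1) ∪ V1, (e2 \ V1) ∪ U1} ⊆ insert ((e2 \ V1) ∪ U1) D := by
    intro g hg
    simp only [mem_union, mem_insert, mem_singleton] at hg ⊢
    rcases hg with hg | rfl | rfl <;> tauto
  have hwU : w ∉ U1 := (mem_sdiff.1 hw).2
  have hcyc1 : ∀ z ∈ U1, Relation.ReflTransGen (HAdj D) z w → HasCycle E := fun z hz hzw =>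
    hasCycle_of_reflTransGen_erase he1 (hU hz) (sdiff_subset hw)
      (fun h => hwU (h ▸ hz)) (reflTransGen_hAdj_mono hD1 hzw)
  rcases reflTransGen_or_exists_of_reflTransGen_insert
    (reflTransGen_hAdj_mono hsub (hE' u w)) with huw | ⟨z, hz, hzw⟩
  · exact hE (hcyc1 u hu huw)
  rcases mem_union.1 hz with hz | hz
  · have hwx : HAdj D w x := ⟨disjoint_left.1 hd1 hw ∘ (· ▸ hx), _, hmem,
      mem_union_left _ hw, mem_union_right _ hx⟩
    have hzx : z ≠ x := fun h => (mem_sdiff.1 hz).2 (h ▸ hx)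
    exact hE (hasCycle_of_reflTransGen_erase he2 (sdiff_subset hz) (hV hx) hzx
      (reflTransGen_hAdj_mono hD2 (hzw.tail hwx)))
  · exact hE (hcyc1 z hz hzw)

lemma switched_snd_not_mem {V : Type*} [DecidableEq V] {E : Finset (Finset V)}
    {e1 e2 U1 V1 : Finset V} (hE : ¬ HasCycle E)
    (hE' : HyperConnected ((E \ {e1, e2}) ∪ {(e1 \ U1) ∪ V1, (e2 \ V1) ∪ U1}))
    (he1 : e1 ∈ E) (he2 : e2 ∈ E) (hU : U1 ⊆ e1) (hV : V1 ⊆ e2) (hcard : U1.card = V1.card)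
    (hd2 : Disjoint (e2 \ V1) U1) (hc : 2 ≤ ((e2 \ V1) ∪ U1).card) :
    (e2 \ V1) ∪ U1 ∉ E \ {e1, e2} := by
  rw [pair_comm e1 e2, pair_comm ((e1 \ U1) ∪ V1)] at hE'
  rw [pair_comm e1 e2]
  exact switched_fst_not_mem hE hE' he2 he1 hV hU hcard.symm hd2 hc

lemma switch_self_eq {V : Type*} [DecidableEq V] {E : Finset (Finset V)} {e U1 V1 : Finset V}
    (he : e ∈ E) (hU : U1 ⊆ e) (hV : V1 ⊆ e) (hc1 : e.card ≤ ((e \ U1) ∪ V1).card)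
    (hc2 : e.card ≤ ((e \ V1) ∪ U1).card) :
    (E \ {e, e}) ∪ {(e \ U1) ∪ V1, (e \ V1) ∪ U1} = E := by
  rw [eq_of_subset_of_card_le (union_subset sdiff_subset hV) hc1,
    eq_of_subset_of_card_le (union_subset sdiff_subset hU) hc2,
    sdiff_union_of_subset (by simpa using he)]

/-- the switching lemma. If f is the first Dirichlet eigenfunction
of a k-uniform supertree G, and the switched hypergraph G' (exchanging
U₁ ⊆ e₁ with V₁ ⊆ e₂, |U₁| = |V₁|) is again a k-uniform supertree, and
Σ_{U₁} f ≥ Σ_{V₁} f and Σ_{e₁∖U₁} f ≤ Σ_{e₂∖V₁} f, then λ(G') ≤ λ(G). -/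
theorem switching_lemma (k : ℕ) (hk : 2 ≤ k)
    (E : Finset (Finset V)) (hG : IsSupertree k E)
    (f : V → ℝ) (hf : IsFirstEigfun E f)
    (e1 e2 : Finset V) (he1 : e1 ∈ E) (he2 : e2 ∈ E)
    (U1 V1 : Finset V) (hU : U1 ⊆ e1) (hV : V1 ⊆ e2) (hcard : U1.card = V1.card)
    (hG' : IsSupertree k ((E \ {e1, e2}) ∪ {(e1 \ U1) ∪ V1, (e2 \ V1) ∪ U1}))
    (h1 : ∑ x ∈ V1, f x ≤ ∑ x ∈ U1, f x)
    (h2 : ∑ x ∈ e1 \ U1, f x ≤ ∑ x ∈ e2 \ V1, f x) :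
    firstEig ((E \ {e1, e2}) ∪ {(e1 \ U1) ∪ V1, (e2 \ V1) ∪ U1}) ≤ firstEig E := by
  have hc1 := hG.1 e1 he1
  have hc2 := hG.1 e2 he2
  have hc1' := hG'.1 ((e1 \ U1) ∪ V1) (by simp)
  have hc2' := hG'.1 ((e2 \ V1) ∪ U1) (by simp)
  by_cases hne : e1 = e2
  · subst hne
    rw [switch_self_eq he1 hU hV (by omega) (by omega)]
  have hd1 := disjoint_sdiff_of_card_union hU hcard (hc1'.trans hc1.symm)
  have hd2 := disjoint_sdiff_of_card_union hV hcard.symm (hc2'.trans hc2.symm)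
  have hne' := switch_ne_of_ne hne (hc1'.trans hc1.symm).le (hc2'.trans hc2.symm).le
  have hnew1 := switched_fst_not_mem hG.2.2 hG'.2.1 he1 he2 hU hV hcard hd1 (by omega)
  have hnew2 := switched_snd_not_mem hG.2.2 hG'.2.1 he1 he2 hU hV hcard hd2 (by omega)
  have hvan : Vanishes ((E \ {e1, e2}) ∪ {(e1 \ U1) ∪ V1, (e2 \ V1) ∪ U1}) f := fun v hv =>
    hf.2.1 v (deg_switched he1 he2 hU hV hd1 hd2 hne hne' hnew1 hnew2 v ▸ hv)
  have hsum := sum_replace_pair (edgeForm · f) he1 he2 hne hne' hnew1 hnew2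
  have hedge := edgeForm_switched_le hk hU hV hd1 hd2 hc1 hc2 hc1' hc2' h1 h2
  calc firstEig ((E \ {e1, e2}) ∪ {(e1 \ U1) ∪ V1, (e2 \ V1) ∪ U1})
      ≤ lapForm ((E \ {e1, e2}) ∪ {(e1 \ U1) ∪ V1, (e2 \ V1) ∪ U1}) f :=
        firstEig_le_lapForm (fun e he => (hG'.1 e he).symm ▸ hk) hvan hf.1
    _ ≤ lapForm E f := by
        rw [lapForm_eq_sum_edgeForm, lapForm_eq_sum_edgeForm]
        linarith
    _ = firstEig E := hf.firstEig_eq_lapForm.symm
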